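/- Let S₄ : ℕ → ℚ be defined by S₄(d) = Σ_{i₁=2}^{d−1} Σ_{i₂=2}^{i₁} Σ_{i₃=2}^{i₂} Σ_{i₄=2}^{i₃} (12i₁² − 18i₁)(12i₂² − 18i₂)(12i₃² − 18i₃)(12i₄² − 18i₄) + (3d² − 7d) · Σ_{i₂=2}^{d−1} Σ_{i₃=2}^{i₂} Σ_{i₄=2}^{i₃} (12i₂² − 18i₂)(12i₃² − 18i₃)(12i₄² − 18i₄). Then there exists a real constant C > 0 such that for every natural number d ≥ 2 one has |S₄(d) − ((32/3)d¹² − (64/5)d¹¹)| ≤ C·d¹⁰. (This is the δ = 4 computation in the Remark after Theorem 3.2.) -/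
import Mathlib


open Finset

/-- The weighted count `A₄(d)` of artificial 4-nodal floor plans of degree `d`. -/
noncomputable def S₄ (d : ℕ) : ℚ :=
  (∑ i₁ ∈ Finset.Icc (2 : ℤ) ((d : ℤ) - 1), ∑ i₂ ∈ Finset.Icc (2 : ℤ) i₁,
      ∑ i₃ ∈ Finset.Icc (2 : ℤ) i₂, ∑ i₄ ∈ Finset.Icc (2 : ℤ) i₃,
      (12 * (i₁ : ℚ) ^ 2 - 18 * (i₁ : ℚ)) * (12 * (i₂ : ℚ) ^ 2 - 18 * (i₂ : ℚ)) *
        (12 * (i₃ : ℚ) ^ 2 - 18 * (i₃ : ℚ)) * (12 * (i₄ : ℚ) ^ 2 - 18 * (i₄ : ℚ)))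
  + (3 * (d : ℚ) ^ 2 - 7 * (d : ℚ)) *
      (∑ i₂ ∈ Finset.Icc (2 : ℤ) ((d : ℤ) - 1), ∑ i₃ ∈ Finset.Icc (2 : ℤ) i₂,
        ∑ i₄ ∈ Finset.Icc (2 : ℤ) i₃,
        (12 * (i₂ : ℚ) ^ 2 - 18 * (i₂ : ℚ)) * (12 * (i₃ : ℚ) ^ 2 - 18 * (i₃ : ℚ)) *
          (12 * (i₄ : ℚ) ^ 2 - 18 * (i₄ : ℚ)))

private def ff (i : ℤ) : ℚ := 12 * (i : ℚ) ^ 2 - 18 * (i : ℚ)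

private lemma ff_sum_top (g : ℤ → ℚ) {a b : ℤ} (h : a ≤ b + 1) :
    ∑ i ∈ Finset.Icc a (b + 1), g i = (∑ i ∈ Finset.Icc a b, g i) + g (b + 1) := by
  have : Finset.Icc a (b + 1) = insert (b + 1) (Finset.Icc a b) := by
    ext i; simp only [Finset.mem_Icc, Finset.mem_insert]; omega
  rw [this, Finset.sum_insert (by simp), add_comm]

private lemma L1 : ∀ n : ℤ, 1 ≤ n →
    ∑ i ∈ Finset.Icc (2 : ℤ) n, ff i
      = 4 * (n : ℚ) ^ 3 - 3 * (n : ℚ) ^ 2 - 7 * (n : ℚ) + 6 := by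
  refine Int.le_induction ?_ ?_
  · rw [Finset.Icc_eq_empty (by norm_num)]; norm_num
  · intro n hn ih
    rw [ff_sum_top _ (by linarith), ih]
    simp only [ff]; push_cast; ring

private lemma L2 : ∀ n : ℤ, 1 ≤ n →
    ∑ i ∈ Finset.Icc (2 : ℤ) n, ff i * ∑ j ∈ Finset.Icc (2 : ℤ) i, ff j
      = 8 * (n : ℚ) ^ 6 + 12/5 * (n : ℚ) ^ 5 - 83/2 * (n : ℚ) ^ 4 + 15 * (n : ℚ) ^ 3
        + 67/2 * (n : ℚ) ^ 2 - 87/5 * (n : ℚ) := by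
  refine Int.le_induction ?_ ?_
  · rw [Finset.Icc_eq_empty (by norm_num)]; norm_num
  · intro n hn ih
    rw [ff_sum_top _ (by linarith), ih, L1 (n + 1) (by linarith)]
    simp only [ff]; push_cast; ring

private lemma L3 : ∀ n : ℤ, 1 ≤ n →
    ∑ i ∈ Finset.Icc (2 : ℤ) n, ff i * ∑ j ∈ Finset.Icc (2 : ℤ) i,
      ff j * ∑ k ∈ Finset.Icc (2 : ℤ) j, ff k
      = 32/3 * (n : ℚ) ^ 9 + 168/5 * (n : ℚ) ^ 8 - 2482/35 * (n : ℚ) ^ 7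
        - 1833/10 * (n : ℚ) ^ 6 + 349/2 * (n : ℚ) ^ 5 + 2829/10 * (n : ℚ) ^ 4
        - 4379/30 * (n : ℚ) ^ 3 - 666/5 * (n : ℚ) ^ 2 + 222/7 * (n : ℚ) := by
  refine Int.le_induction ?_ ?_
  · rw [Finset.Icc_eq_empty (by norm_num)]; norm_num
  · intro n hn ih
    rw [ff_sum_top _ (by linarith), ih, L2 (n + 1) (by linarith)]
    simp only [ff]; push_cast; ring

private lemma L4 : ∀ n : ℤ, 1 ≤ n →
    ∑ i ∈ Finset.Icc (2 : ℤ) n, ff i * ∑ j ∈ Finset.Icc (2 : ℤ) i,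
      ff j * ∑ k ∈ Finset.Icc (2 : ℤ) j, ff k * ∑ l ∈ Finset.Icc (2 : ℤ) k, ff l
      = 32/3 * (n : ℚ) ^ 12 + 416/5 * (n : ℚ) ^ 11 + 40612/525 * (n : ℚ) ^ 10
        - 22906/35 * (n : ℚ) ^ 9 - 42209/40 * (n : ℚ) ^ 8 + 133443/70 * (n : ℚ) ^ 7
        + 1015837/300 * (n : ℚ) ^ 6 - 12236/5 * (n : ℚ) ^ 5 - 3460381/840 * (n : ℚ) ^ 4
        + 83213/70 * (n : ℚ) ^ 3 + 85029/50 * (n : ℚ) ^ 2 - 2682/35 * (n : ℚ) := by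
  refine Int.le_induction ?_ ?_
  · rw [Finset.Icc_eq_empty (by norm_num)]; norm_num
  · intro n hn ih
    rw [ff_sum_top _ (by linarith), ih, L3 (n + 1) (by linarith)]
    simp only [ff]; push_cast; ring

private lemma S₄_eq (d : ℕ) (hd : 2 ≤ d) :
    S₄ d = 32/3 * (d : ℚ) ^ 12 - 64/5 * (d : ℚ) ^ 11 - 207748/525 * (d : ℚ) ^ 10
      + 47984/35 * (d : ℚ) ^ 9 + 176853/280 * (d : ℚ) ^ 8 - 577491/70 * (d : ℚ) ^ 7
      + 2655757/300 * (d : ℚ) ^ 6 + 26689/5 * (d : ℚ) ^ 5 - 9364769/840 * (d : ℚ) ^ 4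
      + 114137/70 * (d : ℚ) ^ 3 + 717303/350 * (d : ℚ) ^ 2 - 2682/35 * (d : ℚ) := by
  have h1 : (1 : ℤ) ≤ (d : ℤ) - 1 := by
    have : (2 : ℤ) ≤ (d : ℤ) := by exact_mod_cast hd
    linarith
  have e : S₄ d =
      (∑ i₁ ∈ Finset.Icc (2 : ℤ) ((d : ℤ) - 1), ∑ i₂ ∈ Finset.Icc (2 : ℤ) i₁,
        ∑ i₃ ∈ Finset.Icc (2 : ℤ) i₂, ∑ i₄ ∈ Finset.Icc (2 : ℤ) i₃,
          ff i₁ * ff i₂ * ff i₃ * ff i₄)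
      + (3 * (d : ℚ) ^ 2 - 7 * (d : ℚ)) *
        (∑ i₂ ∈ Finset.Icc (2 : ℤ) ((d : ℤ) - 1), ∑ i₃ ∈ Finset.Icc (2 : ℤ) i₂,
          ∑ i₄ ∈ Finset.Icc (2 : ℤ) i₃, ff i₂ * ff i₃ * ff i₄) := rfl
  rw [e]
  simp only [mul_assoc, ← Finset.mul_sum]
  rw [L4 _ h1, L3 _ h1]
  have hc : (((d : ℤ) - 1 : ℤ) : ℚ) = (d : ℚ) - 1 := by push_cast; ring
  rw [hc]; ring

/-- The δ = 4 computation in the Remark after Theorem 3.2: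
`A₄(d) = (32/3)d¹² − (64/5)d¹¹ + O(d¹⁰)`. -/
theorem stmt_2 :
    ∃ C : ℝ, 0 < C ∧ ∀ d : ℕ, 2 ≤ d →
      |((S₄ d : ℚ) : ℝ) - (32 / 3 * (d : ℝ) ^ 12 - 64 / 5 * (d : ℝ) ^ 11)| ≤
        C * (d : ℝ) ^ 10 := by
  refine ⟨11923087/300, by norm_num, ?_⟩
  intro d hd
  rw [S₄_eq d hd]
  push_cast
  set x : ℝ := (d : ℝ) with hx
  have hx1 : (1 : ℝ) ≤ x := by
    simp only [hx]; exact_mod_cast Nat.one_le_of_lt hd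
  have h0 : (0 : ℝ) ≤ x := by linarith
  have p1 : x ≤ x ^ 10 := by
    calc x = x ^ 1 := (pow_one x).symm
    _ ≤ x ^ 10 := pow_le_pow_right₀ hx1 (by norm_num)
  have p2 : x ^ 2 ≤ x ^ 10 := pow_le_pow_right₀ hx1 (by norm_num)
  have p3 : x ^ 3 ≤ x ^ 10 := pow_le_pow_right₀ hx1 (by norm_num)
  have p4 : x ^ 4 ≤ x ^ 10 := pow_le_pow_right₀ hx1 (by norm_num)
  have p5 : x ^ 5 ≤ x ^ 10 := pow_le_pow_right₀ hx1 (by norm_num)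
  have p6 : x ^ 6 ≤ x ^ 10 := pow_le_pow_right₀ hx1 (by norm_num)
  have p7 : x ^ 7 ≤ x ^ 10 := pow_le_pow_right₀ hx1 (by norm_num)
  have p8 : x ^ 8 ≤ x ^ 10 := pow_le_pow_right₀ hx1 (by norm_num)
  have p9 : x ^ 9 ≤ x ^ 10 := pow_le_pow_right₀ hx1 (by norm_num)
  have n2 : (0 : ℝ) ≤ x ^ 2 := by positivity
  have n3 : (0 : ℝ) ≤ x ^ 3 := by positivity
  have n4 : (0 : ℝ) ≤ x ^ 4 := by positivity
  have n5 : (0 : ℝ) ≤ x ^ 5 := by positivity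
  have n6 : (0 : ℝ) ≤ x ^ 6 := by positivity
  have n7 : (0 : ℝ) ≤ x ^ 7 := by positivity
  have n8 : (0 : ℝ) ≤ x ^ 8 := by positivity
  have n9 : (0 : ℝ) ≤ x ^ 9 := by positivity
  have n10 : (0 : ℝ) ≤ x ^ 10 := by positivity
  rw [abs_le]
  constructor <;> ring_nf <;>
    linarith [p1, p2, p3, p4, p5, p6, p7, p8, p9, h0, n2, n3, n4, n5, n6, n7, n8, n9, n10]
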